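/- arXiv:2211.12885 — 3 statements merged into one kernel-verified Lean document; each statement's English description precedes it below -/
import Mathlib

section
/- Let Π'ᵢ be a finite set of vectors (path costs) forming a cost-unique Pareto frontier for a set C of feasible costs, i.e., for every c ∈ C there exists p ∈ Π'ᵢ with p ⪯ c. Let lb be a vector and LB = ND({comax(lb, p) | p ∈ Π'ᵢ}). Then for every c ∈ C with lb ⪯ c, there exists l ∈ LB with l ⪯ c. (Core of Property 2: any compatible solution remains compatible with some child CT node under cost splitting.) -/
def dom {N : ℕ} (u v : Fin N → ℝ) : Prop := ∀ i, u i ≤ v i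
def sdom {N : ℕ} (u v : Fin N → ℝ) : Prop := dom u v ∧ u ≠ v
def comax {N : ℕ} (u v : Fin N → ℝ) : Fin N → ℝ := fun i => max (u i) (v i)
def ND {N : ℕ} (S : Set (Fin N → ℝ)) : Set (Fin N → ℝ) := {v ∈ S | ∀ u ∈ S, ¬ sdom u v}

theorem stmt9 {N : ℕ} (P : Set (Fin N → ℝ)) (hPfin : P.Finite)
    (C : Set (Fin N → ℝ)) (hPne : C.Nonempty → P.Nonempty)
    (hcov : ∀ c ∈ C, ∃ p ∈ P, dom p c)
    (lb : Fin N → ℝ) :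
    ∀ c ∈ C, dom lb c → ∃ l ∈ ND ((fun p => comax lb p) '' P), dom l c := by
  intro c hc hlb
  set S : Set (Fin N → ℝ) := (fun p => comax lb p) '' P with hS
  set T : Set (Fin N → ℝ) := {v ∈ S | dom v c} with hT
  have hTfin : T.Finite := (hPfin.image _).subset (Set.sep_subset _ _)
  obtain ⟨p, hpP, hpc⟩ := hcov c hc
  have hvT : comax lb p ∈ T := by
    refine ⟨⟨p, hpP, rfl⟩, fun i => ?_⟩
    exact max_le (hlb i) (hpc i)
  obtain ⟨l, hlT, hmin⟩ := hTfin.exists_minimalFor id T ⟨_, hvT⟩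
  refine ⟨l, ⟨hlT.1, fun u huS ⟨hud, hune⟩ => ?_⟩, hlT.2⟩
  have huT : u ∈ T := ⟨huS, fun i => le_trans (hud i) (hlT.2 i)⟩
  exact hune (le_antisymm (fun i => hud i) (hmin huT (fun i => hud i)))
end

section
/- Let P = [p¹, ..., pᵏ] be a sequence of pairwise non-dominated, pairwise distinct vectors in ℝ^N, and for each j define UBʲ = ND({comax(pʲ, pˡ) | l < j}). Then for any vector c such that some pʲ satisfies pʲ ⪯ c, there is exactly one index j such that both pʲ ⪯ c and no u ∈ UBʲ satisfies u ⪯ c. (Core of Property 2.5: any solution is compatible with exactly one root CT node under disjoint cost splitting.) -/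
lemma nd_below {N : ℕ} (S : Set (Fin N → ℝ)) (hS : S.Finite) (v : Fin N → ℝ)
    (hv : v ∈ S) : ∃ u ∈ ND S, dom u v := by
  classical
  have hfin : {u ∈ S | dom u v}.Finite := hS.subset (fun x hx => hx.1)
  obtain ⟨a, ha, hmin⟩ := hfin.exists_minimal ⟨v, hv, fun i => le_refl _⟩
  refine ⟨a, ⟨ha.1, fun u hu hsd => ?_⟩, ha.2⟩
  have huv : dom u v := fun i => le_trans (hsd.1 i) (ha.2 i)
  have : u = a := le_antisymm (by exact hsd.1) (hmin ⟨hu, huv⟩ (by exact hsd.1))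
  exact hsd.2 this

theorem stmt10 {N k : ℕ} (p : Fin k → Fin N → ℝ)
    (hdist : ∀ j l, j ≠ l → p j ≠ p l)
    (hnd : ∀ j l, j ≠ l → ¬ sdom (p l) (p j))
    (c : Fin N → ℝ) (hc : ∃ j, dom (p j) c) :
    ∃! j, dom (p j) c ∧
      ∀ u ∈ ND {w | ∃ l, l < j ∧ w = comax (p j) (p l)}, ¬ dom u c := by
  classical
  obtain ⟨j, hj, hjmin⟩ := Finset.exists_min_image (Finset.univ.filter (fun j => dom (p j) c))
    id (by obtain ⟨j, hj⟩ := hc; exact ⟨j, Finset.mem_filter.2 ⟨Finset.mem_univ _, hj⟩⟩)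
  have hjdom : dom (p j) c := (Finset.mem_filter.1 hj).2
  have hjle : ∀ l, dom (p l) c → j ≤ l := fun l hl =>
    hjmin l (Finset.mem_filter.2 ⟨Finset.mem_univ _, hl⟩)
  refine ⟨j, ⟨hjdom, ?_⟩, ?_⟩
  · rintro u ⟨⟨l, hlj, rfl⟩, -⟩ hud
    have : dom (p l) c := fun i => le_trans (le_max_right _ _) (hud i)
    exact absurd (hjle l this) (not_le.2 hlj)
  · rintro j' ⟨hj'dom, hj'nd⟩
    by_contra hne
    have hjj' : j < j' := lt_of_le_of_ne (hjle j' hj'dom) (Ne.symm hne)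
    set S : Set (Fin N → ℝ) := {w | ∃ l, l < j' ∧ w = comax (p j') (p l)} with hSdef
    have hSfin : S.Finite := by
      have : S ⊆ (fun l => comax (p j') (p l)) '' Set.univ := by
        rintro w ⟨l, -, rfl⟩; exact ⟨l, trivial, rfl⟩
      exact Set.Finite.subset ((Set.finite_univ).image _) this
    have hmem : comax (p j') (p j) ∈ S := ⟨j, hjj', rfl⟩
    obtain ⟨u, hu, hudom⟩ := nd_below S hSfin _ hmem
    have : dom u c := fun i =>
      le_trans (hudom i) (max_le (hj'dom i) (hjdom i))
    exact hj'nd u hu this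
end

section
/- In the disjoint cost splitting construction, suppose lb₁, ..., lbₖ are the cost lower bounds of generated child nodes in order, and node j has upper bound set UBʲ = ND({comax(lbⱼ, v) | v ∈ UB₀ ∪ {lb₁,...,lb_{j-1}}}) for an initial set UB₀. Then for any vector c with no u ∈ UB₀ satisfying u ⪯ c, at most one index j satisfies lbⱼ ⪯ c and ∀u ∈ UBʲ, ¬(u ⪯ c). -/
lemma dom_iff_le {N : ℕ} (u v : Fin N → ℝ) : dom u v ↔ u ≤ v := Iff.rfl

lemma ND_exists_le {N : ℕ} (S : Set (Fin N → ℝ)) (hS : S.Finite)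
    (w : Fin N → ℝ) (hw : w ∈ S) : ∃ m ∈ ND S, dom m w := by
  have hS' : {s ∈ S | dom s w}.Finite := hS.subset (Set.sep_subset _ _)
  obtain ⟨m, hm, hmin⟩ := hS'.exists_minimalFor id _ ⟨w, hw, fun i => le_rfl⟩
  refine ⟨m, ⟨hm.1, fun u hu ⟨hle, hne⟩ => ?_⟩, hm.2⟩
  exact hne (le_antisymm hle (hmin ⟨hu, fun i => (hle i).trans (hm.2 i)⟩ hle))

theorem stmt14 {N k : ℕ} (UB0 : Set (Fin N → ℝ)) (hUB0 : UB0.Finite)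
    (lb : Fin k → Fin N → ℝ) (UB : Fin k → Set (Fin N → ℝ))
    (hUB : ∀ j, UB j =
      ND ((fun v => comax (lb j) v) '' (UB0 ∪ {w | ∃ l, l < j ∧ w = lb l})))
    (c : Fin N → ℝ) (hc : ∀ u ∈ UB0, ¬ dom u c) :
    ∀ j j' : Fin k,
      (dom (lb j) c ∧ ∀ u ∈ UB j, ¬ dom u c) →
      (dom (lb j') c ∧ ∀ u ∈ UB j', ¬ dom u c) → j = j' := by
  -- key: if j < j' and both conditions hold, contradiction
  have key : ∀ j j' : Fin k, j < j' →
      (dom (lb j) c ∧ ∀ u ∈ UB j, ¬ dom u c) →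
      (dom (lb j') c ∧ ∀ u ∈ UB j', ¬ dom u c) → False := by
    intro j j' hlt ⟨hj, _⟩ ⟨hj', hUBj'⟩
    set S := (fun v => comax (lb j') v) '' (UB0 ∪ {w | ∃ l, l < j' ∧ w = lb l})
    have hSfin : S.Finite := by
      apply Set.Finite.image
      apply hUB0.union
      exact (Set.finite_range lb).subset (fun w ⟨l, _, hw⟩ => ⟨l, hw.symm⟩)
    have hwS : comax (lb j') (lb j) ∈ S :=
      ⟨lb j, Or.inr ⟨j, hlt, rfl⟩, rfl⟩
    obtain ⟨m, hm, hmle⟩ := ND_exists_le S hSfin _ hwS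
    have hdomc : dom (comax (lb j') (lb j)) c := fun i => max_le (hj' i) (hj i)
    exact hUBj' m ((hUB j').symm ▸ hm) (fun i => (hmle i).trans (hdomc i))
  intro j j' h1 h2
  rcases lt_trichotomy j j' with h | h | h
  · exact absurd (key j j' h h1 h2) (by simp)
  · exact h
  · exact absurd (key j' j h h2 h1) (by simp)
end
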